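/- Let n*, p*, n̄, p̄ > 0 satisfy n̄ − n* = p̄ − p*. Then n*·λ_B(n̄/n*) + p*·λ_B(p̄/p*) ≤ C₀·(√(n̄p̄/(n*p*)) − 1)², where λ_B(ν) = ν·log ν − ν + 1 and C₀ = C₁·(p* + (p*)²/n* + 2n*/max{p̄/p*, n̄/n*}) with C₁ = 2·max{1 + |log(n̄/n*)|, 1 + |log(p̄/p*)|}, provided n̄/n* ≥ 1/4 and p̄/p* ≥ 1/4. -/

import Mathlib

/-!
Write `a = √(n̄/n*)` and `b = √(p̄/p*)`, so that `√(n̄p̄/(n*p*)) = ab` and the constraint reads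
`n*(a² - 1) = p*(b² - 1)`. Pointwise, `λ_B(s²) ≤ 2 (1 + |log s²|) (s - 1)²`: for `s ≥ 1` this
follows from `2 log s ≤ s - s⁻¹ = 2 sinh (log s)`, for `s ≤ 1` from the Taylor bound
`log s ≤ (s - 1) - (s - 1)²/2`. It remains to bound `n*(a - 1)² + p*(b - 1)²` by
`(p* + (p*)²/n* + 2n*/max{a², b²}) (ab - 1)²`. The constraint puts `a` and `b` on the same side
of `1`, whence `|b - 1| ≤ |ab - 1|`, and likewise for `a` when `a ≤ 1`. For `1 ≤ a ≤ b` one has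
`b (a - 1) ≤ ab - 1`, and for `1 ≤ b ≤ a` the constraint gives
`n*(a - 1) = p*(b² - 1)/(a + 1) ≤ p*(ab - 1)`.
-/

/-- The Boltzmann function. -/
noncomputable def lamB (ν : ℝ) : ℝ := ν * Real.log ν - ν + 1

open Real

lemma two_mul_log_le_sub_inv {x : ℝ} (hx : 1 ≤ x) : 2 * log x ≤ x - x⁻¹ := by
  have := sinh_log (zero_lt_one.trans_le hx)
  linarith [self_le_sinh_iff.mpr (log_nonneg hx)]

lemma log_le_sub_one_sub_sq_div_two {x : ℝ} (hx0 : 0 < x) (hx1 : x ≤ 1) :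
    log x ≤ (x - 1) - (x - 1) ^ 2 / 2 := by
  have hsum := hasSum_pow_div_log_of_abs_lt_one (x := 1 - x)
    (by rw [abs_lt]; constructor <;> linarith)
  have := sum_le_hasSum (Finset.range 2) (fun n _ => by positivity) hsum
  norm_num [Finset.sum_range_succ] at this
  nlinarith

lemma lamB_sq_le_of_one_le {s : ℝ} (hs : 1 ≤ s) :
    lamB (s ^ 2) ≤ 2 * (1 + |log (s ^ 2)|) * (s - 1) ^ 2 := by
  have hs0 : 0 < s := by linarith
  have hB : 2 * s * log s ≤ s ^ 2 - 1 := by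
    have := mul_le_mul_of_nonneg_left (two_mul_log_le_sub_inv hs) hs0.le
    rw [mul_sub, mul_inv_cancel₀ hs0.ne'] at this
    linarith
  have hL : 0 ≤ log s := log_nonneg hs
  rw [lamB, log_pow, abs_of_nonneg (by positivity)]
  push_cast
  have key : s * (2 * (1 + 2 * log s) * (s - 1) ^ 2 - (s ^ 2 * (2 * log s) - s ^ 2 + 1))
      = (2 * s - 1) * (s ^ 2 - 1 - 2 * s * log s) + 2 * s * log s * (s - 1) ^ 2 + (s - 1) ^ 3 := by
    ring
  have h₁ : 0 ≤ (2 * s - 1) * (s ^ 2 - 1 - 2 * s * log s) := mul_nonneg (by linarith) (by linarith)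
  have h₂ : 0 ≤ 2 * s * log s * (s - 1) ^ 2 := by positivity
  have h₃ : 0 ≤ (s - 1) ^ 3 := pow_nonneg (by linarith) 3
  have : 0 ≤ s * (2 * (1 + 2 * log s) * (s - 1) ^ 2 - (s ^ 2 * (2 * log s) - s ^ 2 + 1)) := by
    rw [key]; linarith
  linarith [(mul_nonneg_iff_of_pos_left hs0).mp this]

lemma lamB_sq_le_of_le_one {s : ℝ} (hs0 : 0 < s) (hs : s ≤ 1) :
    lamB (s ^ 2) ≤ 2 * (1 + |log (s ^ 2)|) * (s - 1) ^ 2 := by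
  have hB : 2 * log s ≤ (s - 1) * (3 - s) := by
    linarith [log_le_sub_one_sub_sq_div_two hs0 hs]
  rw [lamB, log_pow, abs_of_nonpos (by nlinarith [log_nonpos hs0.le hs])]
  push_cast
  have key : 2 * (1 + -(2 * log s)) * (s - 1) ^ 2 - (s ^ 2 * (2 * log s) - s ^ 2 + 1)
      = (3 * s ^ 2 - 4 * s + 2) * ((s - 1) * (3 - s) - 2 * log s) + (1 - s) ^ 3 * (7 - 3 * s) := by
    ring
  have h₁ : 0 ≤ (3 * s ^ 2 - 4 * s + 2) * ((s - 1) * (3 - s) - 2 * log s) :=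
    mul_nonneg (by nlinarith [sq_nonneg (s - 1)]) (by linarith)
  have h₂ : 0 ≤ (1 - s) ^ 3 * (7 - 3 * s) := mul_nonneg (pow_nonneg (by linarith) 3) (by linarith)
  linarith

lemma lamB_le {ν : ℝ} (hν : 0 < ν) : lamB ν ≤ 2 * (1 + |log ν|) * (√ν - 1) ^ 2 := by
  have h := (le_total 1 √ν).elim lamB_sq_le_of_one_le (lamB_sq_le_of_le_one (sqrt_pos.2 hν))
  rwa [sq_sqrt hν.le] at h

lemma mul_lamB_add_mul_lamB_le {n p x y : ℝ} (hn : 0 ≤ n) (hp : 0 ≤ p) (hx : 0 < x) (hy : 0 < y) :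
    n * lamB x + p * lamB y
      ≤ 2 * max (1 + |log x|) (1 + |log y|) * (n * (√x - 1) ^ 2 + p * (√y - 1) ^ 2) := by
  have hx' : lamB x ≤ 2 * max (1 + |log x|) (1 + |log y|) * (√x - 1) ^ 2 :=
    (lamB_le hx).trans (by gcongr; exact le_max_left _ _)
  have hy' : lamB y ≤ 2 * max (1 + |log x|) (1 + |log y|) * (√y - 1) ^ 2 :=
    (lamB_le hy).trans (by gcongr; exact le_max_right _ _)
  linarith [mul_le_mul_of_nonneg_left hx' hn, mul_le_mul_of_nonneg_left hy' hp]

lemma mul_sub_one_nonneg_of_mul_sq_sub_one_eq {n p a b : ℝ} (hn : 0 < n) (hp : 0 < p)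
    (ha : 0 ≤ a) (hb : 0 ≤ b) (h : n * (a ^ 2 - 1) = p * (b ^ 2 - 1)) :
    0 ≤ (a - 1) * (b - 1) := by
  have : 0 ≤ (n * p) * ((a + 1) * (b + 1)) * ((a - 1) * (b - 1)) := by
    have : 0 ≤ (n * (a ^ 2 - 1)) * (p * (b ^ 2 - 1)) := h ▸ mul_self_nonneg _
    linarith
  exact nonneg_of_mul_nonneg_right this (by positivity)

lemma sq_sub_one_le_sq_mul_sub_one {a b : ℝ} (ha : 0 ≤ a) (hb : 0 ≤ b)
    (hab : 0 ≤ (a - 1) * (b - 1)) : (b - 1) ^ 2 ≤ (a * b - 1) ^ 2 := by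
  have key : (a * b - 1) ^ 2 - (b - 1) ^ 2 = b * ((a + 1) * ((a - 1) * (b - 1)) + (a - 1) ^ 2) := by
    ring
  have : 0 ≤ (a + 1) * ((a - 1) * (b - 1)) := mul_nonneg (by linarith) hab
  have : 0 ≤ b * ((a + 1) * ((a - 1) * (b - 1)) + (a - 1) ^ 2) := by positivity
  linarith

lemma mul_sq_sub_one_le_of_le_one {n p a b : ℝ} (hn : 0 < n) (hp : 0 < p) (ha : 0 < a)
    (hb : 0 ≤ b) (ha1 : a ≤ 1) (h : n * (a ^ 2 - 1) = p * (b ^ 2 - 1)) :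
    n * (a - 1) ^ 2 ≤ 2 * n / max (b ^ 2) (a ^ 2) * (a * b - 1) ^ 2 := by
  have ha2 : a ^ 2 ≤ 1 := pow_le_one₀ ha.le ha1
  have hb2 : b ^ 2 ≤ 1 := by nlinarith
  have hb1 : b ≤ 1 := (pow_le_one_iff_of_nonneg hb two_ne_zero).mp hb2
  have hsq : (a - 1) ^ 2 ≤ (a * b - 1) ^ 2 := by
    rw [mul_comm]
    exact sq_sub_one_le_sq_mul_sub_one hb ha.le
      (mul_nonneg_of_nonpos_of_nonpos (by linarith) (by linarith))
  have hn2 : n ≤ 2 * n / max (b ^ 2) (a ^ 2) := by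
    rw [le_div_iff₀ (by positivity)]
    nlinarith [max_le hb2 ha2]
  calc n * (a - 1) ^ 2 ≤ n * (a * b - 1) ^ 2 := by gcongr
    _ ≤ _ := by gcongr

lemma mul_sq_sub_one_le_of_one_le_of_le {n a b : ℝ} (hn : 0 ≤ n) (ha1 : 1 ≤ a) (hab : a ≤ b) :
    n * (a - 1) ^ 2 ≤ 2 * n / max (b ^ 2) (a ^ 2) * (a * b - 1) ^ 2 := by
  have hb : 0 < b := by linarith
  rw [max_eq_left (pow_le_pow_left₀ (by linarith) hab 2), div_mul_eq_mul_div,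
    le_div_iff₀ (by positivity)]
  have : (b * (a - 1)) ^ 2 ≤ (a * b - 1) ^ 2 := by
    apply pow_le_pow_left₀ (by nlinarith)
    nlinarith
  nlinarith

lemma mul_sq_sub_one_le_of_one_le_of_ge {n p a b : ℝ} (hn : 0 < n) (hp : 0 < p) (hb1 : 1 ≤ b)
    (hba : b ≤ a) (h : n * (a ^ 2 - 1) = p * (b ^ 2 - 1)) :
    n * (a - 1) ^ 2 ≤ p ^ 2 / n * (a * b - 1) ^ 2 := by
  have hfirst : n * (a - 1) ≤ p * (a * b - 1) := by
    have : (a + 1) * (n * (a - 1)) ≤ (a + 1) * (p * (a * b - 1)) := by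
      have : b ^ 2 - 1 ≤ (a + 1) * (a * b - 1) := by nlinarith
      calc (a + 1) * (n * (a - 1)) = p * (b ^ 2 - 1) := by rw [← h]; ring
        _ ≤ p * ((a + 1) * (a * b - 1)) := by gcongr
        _ = _ := by ring
    exact le_of_mul_le_mul_left this (by linarith)
  rw [div_mul_eq_mul_div, le_div_iff₀ hn]
  have := pow_le_pow_left₀ (by nlinarith) hfirst 2
  nlinarith

lemma mul_sq_sub_one_le {n p a b : ℝ} (hn : 0 < n) (hp : 0 < p) (ha : 0 < a) (hb : 0 ≤ b)
    (h : n * (a ^ 2 - 1) = p * (b ^ 2 - 1)) :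
    n * (a - 1) ^ 2 ≤ (p ^ 2 / n + 2 * n / max (b ^ 2) (a ^ 2)) * (a * b - 1) ^ 2 := by
  have hp' : 0 ≤ p ^ 2 / n * (a * b - 1) ^ 2 := by positivity
  have hn' : 0 ≤ 2 * n / max (b ^ 2) (a ^ 2) * (a * b - 1) ^ 2 := by positivity
  rw [add_mul]
  rcases le_total a 1 with ha1 | ha1
  · linarith [mul_sq_sub_one_le_of_le_one hn hp ha hb ha1 h]
  have hb1 : 1 ≤ b := by
    have : 0 ≤ b ^ 2 - 1 := nonneg_of_mul_nonneg_right (h ▸ mul_nonneg hn.le (by nlinarith)) hp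
    nlinarith
  rcases le_total a b with hab | hba
  · linarith [mul_sq_sub_one_le_of_one_le_of_le hn.le ha1 hab]
  · linarith [mul_sq_sub_one_le_of_one_le_of_ge hn hp hb1 hba h]

lemma mul_sq_sub_one_add_mul_sq_sub_one_le {n p a b : ℝ} (hn : 0 < n) (hp : 0 < p) (ha : 0 < a)
    (hb : 0 ≤ b) (h : n * (a ^ 2 - 1) = p * (b ^ 2 - 1)) :
    n * (a - 1) ^ 2 + p * (b - 1) ^ 2
      ≤ (p + p ^ 2 / n + 2 * n / max (b ^ 2) (a ^ 2)) * (a * b - 1) ^ 2 := by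
  have hb' : p * (b - 1) ^ 2 ≤ p * (a * b - 1) ^ 2 := by
    refine mul_le_mul_of_nonneg_left ?_ hp.le
    exact sq_sub_one_le_sq_mul_sub_one ha.le hb
      (mul_sub_one_nonneg_of_mul_sq_sub_one_eq hn hp ha.le hb h)
  linarith [mul_sq_sub_one_le hn hp ha hb h]

theorem entropy_averages_estimate_general (ns ps nb pb : ℝ)
    (hns : 0 < ns) (hps : 0 < ps) (hnb : 0 < nb) (hpb : 0 < pb)
    (hcons : nb - ns = pb - ps) :
    ns * lamB (nb / ns) + ps * lamB (pb / ps)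
      ≤ (2 * max (1 + |Real.log (nb / ns)|) (1 + |Real.log (pb / ps)|))
          * (ps + ps ^ 2 / ns + 2 * ns / max (pb / ps) (nb / ns))
          * (Real.sqrt (nb * pb / (ns * ps)) - 1) ^ 2 := by
  have hν : 0 < nb / ns := div_pos hnb hns
  have hπ : 0 < pb / ps := div_pos hpb hps
  have hν2 : √(nb / ns) ^ 2 = nb / ns := sq_sqrt hν.le
  have hπ2 : √(pb / ps) ^ 2 = pb / ps := sq_sqrt hπ.le
  have hcons' : ns * (√(nb / ns) ^ 2 - 1) = ps * (√(pb / ps) ^ 2 - 1) := by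
    rw [hν2, hπ2]
    field_simp
    linarith
  have hsqrt : √(nb * pb / (ns * ps)) = √(nb / ns) * √(pb / ps) := by
    rw [← sqrt_mul hν.le, div_mul_div_comm]
  calc ns * lamB (nb / ns) + ps * lamB (pb / ps)
      ≤ 2 * max (1 + |log (nb / ns)|) (1 + |log (pb / ps)|)
        * (ns * (√(nb / ns) - 1) ^ 2 + ps * (√(pb / ps) - 1) ^ 2) :=
        mul_lamB_add_mul_lamB_le hns.le hps.le hν hπ
    _ ≤ 2 * max (1 + |log (nb / ns)|) (1 + |log (pb / ps)|)
        * ((ps + ps ^ 2 / ns + 2 * ns / max (√(pb / ps) ^ 2) (√(nb / ns) ^ 2))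
          * (√(nb / ns) * √(pb / ps) - 1) ^ 2) := by
        gcongr
        exact mul_sq_sub_one_add_mul_sq_sub_one_le hns hps (sqrt_pos.2 hν) (sqrt_nonneg _) hcons'
    _ = _ := by rw [hν2, hπ2, hsqrt]; ring

/-- If `n̄ − n* = p̄ − p*` and `n̄/n* ≥ 1/4`, `p̄/p* ≥ 1/4`, then
`n* λ_B(n̄/n*) + p* λ_B(p̄/p*) ≤ C₀ (√(n̄p̄/(n*p*)) − 1)²` with
`C₀ = C₁ (p* + (p*)²/n* + 2n*/max{p̄/p*, n̄/n*})` and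
`C₁ = 2 max{1 + |log(n̄/n*)|, 1 + |log(p̄/p*)|}`. -/
theorem entropy_averages_estimate (ns ps nb pb : ℝ)
    (hns : 0 < ns) (hps : 0 < ps) (hnb : 0 < nb) (hpb : 0 < pb)
    (hcons : nb - ns = pb - ps)
    (hn4 : 1 / 4 ≤ nb / ns) (hp4 : 1 / 4 ≤ pb / ps) :
    ns * lamB (nb / ns) + ps * lamB (pb / ps)
      ≤ (2 * max (1 + |Real.log (nb / ns)|) (1 + |Real.log (pb / ps)|))
          * (ps + ps ^ 2 / ns + 2 * ns / max (pb / ps) (nb / ns))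
          * (Real.sqrt (nb * pb / (ns * ps)) - 1) ^ 2 :=
  entropy_averages_estimate_general ns ps nb pb hns hps hnb hpb hcons
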